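/- Let A = M_n(ℂ) be the C*-algebra of n×n complex matrices. Then the set of inner binary *-derivations from A to A*, the set of inner Jordan derivations from A to A* that are *-derivations, and the set of all continuous Jordan *-derivations from A to A* all coincide. -/

import Mathlib

/-!
STATEMENT 12: Let `A = M_n(ℂ)` (with the C*-algebra structure given by the `L²`
operator norm and conjugate-transpose involution).  Then the set of inner binary
`*`-derivations from `A` to `A*`, the set of inner Jordan derivations from `A` to
`A*` which are `*`-derivations, and the set of all continuous Jordan
`*`-derivations from `A` to `A*` coincide.
-/

open scoped ComplexConjugate Matrix.Norms.L2Operator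

noncomputable section

variable {n : ℕ}

/-- `M_n(ℂ)`. -/
abbrev MatC (n : ℕ) := Matrix (Fin n) (Fin n) ℂ

/-- The Jordan product `a∘b = (ab+ba)/2`. -/
def jord (a b : MatC n) : MatC n := (2 : ℂ)⁻¹ • (a * b + b * a)

/-- `D : A → A*` (continuous linear) is a Jordan derivation, pointwise on `A*`,
where `(φ∘a)(x) := φ(a∘x)`. -/
def IsJordanDer (D : MatC n →L[ℂ] (MatC n →L[ℂ] ℂ)) : Prop :=
  ∀ a b x : MatC n, D (jord a b) x = D a (jord b x) + D b (jord a x)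

/-- `D : A → A*` is an inner Jordan derivation: a finite sum of the maps
`a ↦ (x₀∘a)∘b − (b∘a)∘x₀`, i.e. pointwise `a ↦ (y ↦ x₀(a∘(b∘y)) − x₀((b∘a)∘y))`. -/
def IsInnerJordanDer (D : MatC n →L[ℂ] (MatC n →L[ℂ] ℂ)) : Prop :=
  ∃ (m : ℕ) (x₀ : Fin m → (MatC n →L[ℂ] ℂ)) (b : Fin m → MatC n),
    ∀ a y : MatC n, D a y
      = ∑ i, (x₀ i (jord a (jord (b i) y)) - x₀ i (jord (jord (b i) a) y))

/-- `D : A → A*` is an inner binary derivation: `D = D_ψ : a ↦ ψa − aψ` for some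
`ψ ∈ A*`, pointwise `D(a)(y) = ψ(a y) − ψ(y a)`. -/
def IsInnerBinaryDer (D : MatC n →L[ℂ] (MatC n →L[ℂ] ℂ)) : Prop :=
  ∃ ψ : MatC n →L[ℂ] ℂ, ∀ a y : MatC n, D a y = ψ (a * y) - ψ (y * a)

/-- `D : A → A*` is a `*`-map: `D(a*) = D(a)*`, where `φ*(x) := conj (φ(x*))`. -/
def IsStarMap (D : MatC n →L[ℂ] (MatC n →L[ℂ] ℂ)) : Prop :=
  ∀ a x : MatC n, D (star a) x = conj (D a (star x))


open Matrix
section Aux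
variable {n : ℕ}

lemma entry_mul_mul (u v : MatC n) (p q r s : Fin n) :
    (u * single q r (1:ℂ) * v) p s = u p q * v r s := by
  rw [mul_assoc, mul_apply]
  have : ∀ k, (single q r (1:ℂ) * v) k s = if k = q then v r s else 0 := by
    intro k
    rw [mul_apply]
    rcases eq_or_ne k q with rfl | hk
    · simp [single_apply_same, single, Finset.sum_ite_eq]
    · simp [single, hk, hk.symm]
  simp only [this, mul_ite, mul_zero]
  simp

lemma mat_prime (u v : MatC n) (h : ∀ x, u * x * v = 0) : u = 0 ∨ v = 0 := by
  by_contra hc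
  push_neg at hc
  obtain ⟨hu, hv⟩ := hc
  obtain ⟨p, q, hpq⟩ : ∃ p q, u p q ≠ 0 := by
    by_contra h'; push_neg at h'; exact hu (Matrix.ext fun i j => h' i j)
  obtain ⟨r, s, hrs⟩ : ∃ r s, v r s ≠ 0 := by
    by_contra h'; push_neg at h'; exact hv (Matrix.ext fun i j => h' i j)
  have := congrFun (congrFun (h (single q r (1:ℂ))) p) s
  rw [entry_mul_mul] at this
  exact (mul_ne_zero hpq hrs) (by simpa using this)

lemma mat_semiprime (u : MatC n) (h : ∀ x, u * x * u = 0) : u = 0 := by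
  rcases mat_prime u u h with h' | h' <;> exact h'

lemma L1 (u v : MatC n) (h : ∀ x, u * x * v = -(v * x * u)) : ∀ x, u * x * v = 0 := by
  have key : ∀ y z : MatC n, v * y * (u * z * u) = 0 := by
    intro y z
    have h1 : u * (y * u * z) * v = -(v * (y * u * z) * u) := h _
    have h2 : u * y * (u * z * v) = v * y * u * z * u := by
      rw [h z]
      have h3 : u * y * v = -(v * y * u) := h y
      calc u * y * -(v * z * u) = -(u * y * v) * z * u := by noncomm_ring
        _ = v * y * u * z * u := by rw [h3]; noncomm_ring
    have e : u * (y * u * z) * v = u * y * (u * z * v) := by noncomm_ring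
    have : -(v * (y * u * z) * u) = v * y * u * z * u := by rw [← h1, e, h2]
    have h4 : (2:ℂ) • (v * y * (u * z * u)) = 0 := by
      have : v * y * u * z * u + v * y * u * z * u = 0 := by
        nth_rewrite 1 [← this]; noncomm_ring
      rw [two_smul]
      calc v * y * (u * z * u) + v * y * (u * z * u)
          = v * y * u * z * u + v * y * u * z * u := by noncomm_ring
        _ = 0 := this
    have h5 := smul_eq_zero.mp h4
    rcases h5 with h5 | h5
    · exact absurd h5 two_ne_zero
    · exact h5
  rcases eq_or_ne v 0 with rfl | hv
  · intro x; rw [h x]; simp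
  · have hu : u = 0 := by
      apply mat_semiprime
      intro z
      rcases mat_prime v (u * z * u) (fun y => key y z) with h' | h'
      · exact absurd h' hv
      · exact h'
    intro x; rw [hu]; simp

section Bresar
variable (Δ : MatC n →ₗ[ℂ] MatC n)
variable (hJ : ∀ a b, Δ (a*b + b*a) = Δ a * b + a * Δ b + Δ b * a + b * Δ a)

include hJ

omit hJ in
lemma half (X Y : MatC n) (h : X + X = Y + Y) : X = Y := by
  have h2 : (2:ℂ) • X = (2:ℂ) • Y := by rw [two_smul, two_smul]; exact h
  exact smul_right_injective (MatC n) two_ne_zero h2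

lemma Fsq (a : MatC n) : Δ (a*a) = Δ a * a + a * Δ a := by
  have h := hJ a a
  rw [map_add] at h
  apply half
  rw [h]; abel

lemma F3 (a b : MatC n) : Δ (a*b*a) = Δ a * b * a + a * Δ b * a + a * b * Δ a := by
  have h1 := hJ a (a*b + b*a)
  have h2 := hJ a b
  have h3 := hJ (a*a) b
  have e : a*(a*b+b*a) + (a*b+b*a)*a = (a*a*b + b*(a*a)) + (a*b*a + a*b*a) := by
    noncomm_ring
  rw [e, h2] at h1
  simp only [map_add] at h1
  have h4 := eq_sub_of_add_eq' h1
  simp only [map_add] at h3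
  rw [h3, Fsq Δ hJ a] at h4
  have hz := sub_eq_zero_of_eq h4
  apply half
  rw [← sub_eq_zero, ← hz]
  noncomm_ring

lemma F4 (a b c : MatC n) : Δ (a*b*c + c*b*a) =
    Δ a * b * c + a * Δ b * c + a * b * Δ c + Δ c * b * a + c * Δ b * a + c * b * Δ a := by
  have h := F3 Δ hJ (a+c) b
  have e : (a+c)*b*(a+c) = (a*b*a + c*b*c) + (a*b*c + c*b*a) := by noncomm_ring
  rw [e] at h
  simp only [map_add] at h ⊢
  rw [F3 Δ hJ a b, F3 Δ hJ c b] at h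
  have h2 := eq_sub_of_add_eq' h
  rw [h2]
  noncomm_ring

lemma F5 (a b x : MatC n) :
    (Δ (a*b) - Δ a * b - a * Δ b) * x * (a*b - b*a)
      = -((a*b - b*a) * x * (Δ (a*b) - Δ a * b - a * Δ b)) := by
  have hba : Δ (b*a) = (Δ a * b + a * Δ b + Δ b * a + b * Δ a) - Δ (a*b) := by
    have h := hJ a b
    rw [map_add] at h
    exact eq_sub_of_add_eq' h
  have h1 := F4 Δ hJ (a*b) x (b*a)
  have e : (a*b)*x*(b*a) + (b*a)*x*(a*b) = a*(b*x*b)*a + b*(a*x*a)*b := by noncomm_ring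
  rw [e, hba] at h1
  rw [map_add, F3 Δ hJ a (b*x*b), F3 Δ hJ b (a*x*a), F3 Δ hJ b x, F3 Δ hJ a x] at h1
  have hz := sub_eq_zero_of_eq h1
  have key : (Δ (a*b) - Δ a * b - a * Δ b) * x * (a*b - b*a)
      + (a*b - b*a) * x * (Δ (a*b) - Δ a * b - a * Δ b) = 0 := by
    rw [← hz]
    noncomm_ring
  exact eq_neg_of_add_eq_zero_left key

lemma jordan_to_der (a b : MatC n) : Δ (a*b) = Δ a * b + a * Δ b := by
  have hΔ1 : Δ 1 = 0 := by
    have h := hJ 1 1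
    rw [one_mul, map_add, one_mul, mul_one] at h
    have h0 : Δ 1 + Δ 1 = 0 := by
      have hs := sub_eq_zero_of_eq h.symm
      rw [← hs]; abel
    exact half (Δ 1) 0 (by simpa using h0)
  rw [← sub_eq_zero]
  have goal_eq : ∀ a' : MatC n, Δ (a'*b) - (Δ a' * b + a' * Δ b)
      = Δ (a'*b) - Δ a' * b - a' * Δ b := by intro a'; abel
  rw [goal_eq]
  have key : ∀ a' : MatC n,
      (Δ (a'*b) - Δ a' * b - a' * Δ b) = 0 ∨ a'*b - b*a' = 0 := by
    intro a'
    apply mat_prime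
    apply L1
    exact fun x => F5 Δ hJ a' b x
  rcases key a with h | h
  · exact h
  · by_cases hb : ∀ a' : MatC n, a'*b - b*a' = 0
    · -- b is central, hence scalar
      have hcomm : ∀ i j : Fin n, Commute (Matrix.single i j (1:ℂ)) b := by
        intro i j
        have := hb (Matrix.single i j (1:ℂ))
        rw [sub_eq_zero] at this
        exact this
      obtain ⟨β, hβ⟩ := Matrix.mem_range_scalar_of_commute_single
        (fun i j _ => hcomm i j)
      have hb1 : b = β • (1 : MatC n) := by
        rw [← hβ]; simp [Matrix.scalar_apply, Matrix.smul_one_eq_diagonal]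
      subst hb1
      have e1 : a * (β • (1:MatC n)) = β • a := by
        rw [mul_smul_comm, mul_one]
      rw [e1, _root_.map_smul, _root_.map_smul, hΔ1, smul_zero, mul_zero,
        mul_smul_comm, mul_one]
      simp
    · push_neg at hb
      obtain ⟨a', ha'⟩ := hb
      have h1 : Δ (a'*b) - Δ a' * b - a' * Δ b = 0 := by
        rcases key a' with h1 | h1
        · exact h1
        · exact absurd h1 ha'
      rcases key (a + a') with h2 | h2
      · have e2 : Δ ((a+a')*b) - Δ (a+a') * b - (a+a') * Δ b
            = (Δ (a*b) - Δ a * b - a * Δ b) + (Δ (a'*b) - Δ a' * b - a' * Δ b) := by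
          rw [add_mul, map_add, map_add]
          noncomm_ring
        rw [e2, h1, add_zero] at h2
        exact h2
      · exfalso
        apply ha'
        have e3 : (a+a')*b - b*(a+a') = (a*b - b*a) + (a'*b - b*a') := by noncomm_ring
        rw [e3, h, zero_add] at h2
        exact h2

end Bresar

section Inner
variable (hn : 0 < n)

/-- basis matrix abbreviation -/
abbrev EE (i j : Fin n) : MatC n := Matrix.single i j (1:ℂ)

lemma sum_EE_one : ∑ k : Fin n, EE k k = (1 : MatC n) := by
  ext i j
  rw [Matrix.sum_apply]
  rcases eq_or_ne i j with rfl | hij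
  · rw [Finset.sum_eq_single i]
    · simp
    · intro k _ hk; exact Matrix.single_apply_of_ne _ _ _ _ _ (by tauto)
    · intro h; exact absurd (Finset.mem_univ i) h
  · rw [Matrix.one_apply_ne hij, Finset.sum_eq_zero]
    intro k _
    exact Matrix.single_apply_of_ne _ _ _ _ _ (by rintro ⟨rfl, rfl⟩; exact hij rfl)

lemma der_inner (Δ : MatC n →ₗ[ℂ] MatC n)
    (hd : ∀ a b, Δ (a*b) = Δ a * b + a * Δ b) :
    ∃ M : MatC n, ∀ a, Δ a = M * a - a * M := by
  rcases Nat.eq_zero_or_pos n with rfl | hn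
  · exact ⟨0, fun a => Subsingleton.elim _ _⟩
  set z : Fin n := ⟨0, hn⟩
  set M : MatC n := ∑ k, Δ (EE k z) * EE z k with hM
  refine ⟨M, fun a => ?_⟩
  have key2 : ∀ a : MatC n,
      ∑ k, Δ (a * EE k z) * EE z k = ∑ k, Δ (EE k z) * (EE z k * a) := by
    intro a
    induction a using Matrix.induction_on' with
    | h_zero => simp
    | h_add p q hp hq =>
      simp only [add_mul, mul_add, map_add]
      rw [Finset.sum_add_distrib, Finset.sum_add_distrib, hp, hq]
    | h_std_basis p q x =>
      have hx : Matrix.single p q x = x • EE p q := by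
        rw [Matrix.smul_single, smul_eq_mul, mul_one]
      rw [hx]
      simp only [smul_mul_assoc, mul_smul_comm, _root_.map_smul]
      rw [← Finset.smul_sum, ← Finset.smul_sum]
      congr 1
      -- now: ∑ k, Δ (EE p q * EE k z) * EE z k = ∑ k, Δ (EE k z) * (EE z k * EE p q)
      rw [Finset.sum_eq_single q, Finset.sum_eq_single p]
      all_goals first
      | (intro k _ hk; simp [Ne.symm hk, hk])
      | (intro k hk; simp [Ne.symm hk, hk])
      | (intro h; exact absurd (Finset.mem_univ _) h)
      | simp
  have expand : ∑ k, Δ (a * EE k z) * EE z k = Δ a + a * M := by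
    have : ∀ k : Fin n, Δ (a * EE k z) * EE z k
        = Δ a * (EE k z * EE z k) + a * (Δ (EE k z) * EE z k) := by
      intro k
      rw [hd a (EE k z), add_mul, mul_assoc, mul_assoc]
    rw [Finset.sum_congr rfl (fun k _ => this k), Finset.sum_add_distrib,
      ← Finset.mul_sum, ← Finset.mul_sum]
    have e1 : ∑ k : Fin n, EE k z * EE z k = (1 : MatC n) := by
      have : ∀ k : Fin n, EE k z * EE z k = EE k k := by
        intro k; rw [Matrix.single_mul_single_same, one_mul]
      rw [Finset.sum_congr rfl (fun k _ => this k)]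
      exact sum_EE_one
    rw [e1, mul_one, hM]
  have expand2 : ∑ k, Δ (EE k z) * (EE z k * a) = M * a := by
    rw [hM, Finset.sum_mul]
    congr 1; ext k; rw [mul_assoc]
  rw [key2, expand2] at expand
  -- expand : M * a = Δ a + a * M
  rw [eq_sub_iff_add_eq]
  exact expand.symm

end Inner

section Dual

noncomputable def jord' (a b : MatC n) : MatC n := (2 : ℂ)⁻¹ • (a * b + b * a)

lemma EE_smul (p q : Fin n) (c : ℂ) : Matrix.single p q c = c • EE p q := by
  rw [Matrix.smul_single, smul_eq_mul, mul_one]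

lemma pairing (φ : MatC n →L[ℂ] ℂ) (y : MatC n) :
    φ y = ∑ p, ∑ q, y p q * φ (EE p q) := by
  conv_lhs => rw [Matrix.matrix_eq_sum_single y]
  rw [map_sum]
  congr 1; funext p
  rw [map_sum]
  congr 1; funext q
  rw [EE_smul p q (y p q), _root_.map_smul, smul_eq_mul]

lemma trace_mul_EE (T : MatC n) (p q : Fin n) :
    Matrix.trace (T * EE q p) = T p q := by
  rw [Matrix.trace]
  rw [Finset.sum_eq_single p]
  · simp [Matrix.diag]
  · intro k _ hk; simp [Matrix.diag, hk]
  · intro h; exact absurd (Finset.mem_univ p) h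

lemma trace_faithful (Z : MatC n) (h : ∀ y, Matrix.trace (Z * y) = 0) : Z = 0 := by
  ext p q
  have := h (EE q p)
  rw [trace_mul_EE] at this
  simpa using this

def Tmap (D : MatC n →L[ℂ] (MatC n →L[ℂ] ℂ)) : MatC n →ₗ[ℂ] MatC n where
  toFun a := Matrix.of (fun p q => D a (EE q p))
  map_add' a b := by
    ext p q
    simp
  map_smul' c a := by
    ext p q
    simp

lemma Tmap_apply (D : MatC n →L[ℂ] (MatC n →L[ℂ] ℂ)) (a : MatC n) (p q : Fin n) :
    Tmap D a p q = D a (EE q p) := rfl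

lemma D_eq_trace (D : MatC n →L[ℂ] (MatC n →L[ℂ] ℂ)) (a y : MatC n) :
    D a y = Matrix.trace (Tmap D a * y) := by
  rw [pairing (D a) y]
  have : Matrix.trace (Tmap D a * y) = ∑ i, ∑ j, Tmap D a i j * y j i := by
    simp [Matrix.trace, Matrix.diag, Matrix.mul_apply]
  rw [this, Finset.sum_comm]
  congr 1; funext p
  congr 1; funext q
  rw [Tmap_apply, mul_comm]

end Dual

noncomputable section Final


lemma trace_jord (X b y : MatC n) :
    Matrix.trace (X * jord b y) = Matrix.trace (jord X b * y) := by
  rw [jord, jord, Matrix.mul_smul, Matrix.smul_mul, Matrix.trace_smul, Matrix.trace_smul]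
  congr 1
  rw [mul_add, add_mul, Matrix.trace_add, Matrix.trace_add]
  congr 1
  · rw [← mul_assoc]
  · rw [← mul_assoc, Matrix.trace_mul_comm (X*y) b, ← mul_assoc]

lemma Tmap_jordan (D : MatC n →L[ℂ] (MatC n →L[ℂ] ℂ))
    (hD : ∀ a b x : MatC n, D (jord a b) x = D a (jord b x) + D b (jord a x)) :
    ∀ a b : MatC n, Tmap D (a*b + b*a)
      = Tmap D a * b + a * Tmap D b + Tmap D b * a + b * Tmap D a := by
  have hT : ∀ a b : MatC n, Tmap D (jord a b) = jord (Tmap D a) b + jord (Tmap D b) a := by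
    intro a b
    have h0 : ∀ y, Matrix.trace ((Tmap D (jord a b)
        - (jord (Tmap D a) b + jord (Tmap D b) a)) * y) = 0 := by
      intro y
      rw [Matrix.sub_mul, Matrix.trace_sub, Matrix.add_mul, Matrix.trace_add]
      rw [← D_eq_trace, ← trace_jord, ← trace_jord, ← D_eq_trace, ← D_eq_trace]
      rw [hD a b y]
      ring
    have := trace_faithful _ h0
    rw [sub_eq_zero] at this
    exact this
  intro a b
  have e : a*b + b*a = (2:ℂ) • jord a b := by
    rw [jord, smul_smul]
    norm_num
  rw [e, _root_.map_smul, hT a b]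
  rw [jord, jord, smul_add, smul_smul, smul_smul]
  norm_num
  abel

lemma main3 (D : MatC n →L[ℂ] (MatC n →L[ℂ] ℂ))
    (hD : ∀ a b x : MatC n, D (jord a b) x = D a (jord b x) + D b (jord a x)) :
    ∃ ψ : MatC n →L[ℂ] ℂ, ∀ a y : MatC n, D a y = ψ (a * y) - ψ (y * a) := by
  have hder := jordan_to_der (Tmap D) (Tmap_jordan D hD)
  obtain ⟨M, hM⟩ := der_inner (Tmap D) hder
  refine ⟨LinearMap.toContinuousLinearMap
    (((Matrix.traceLinearMap (Fin n) ℂ ℂ)).comp (LinearMap.mulLeft ℂ M)), fun a y => ?_⟩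
  simp only [LinearMap.coe_toContinuousLinearMap', LinearMap.comp_apply,
    LinearMap.mulLeft_apply, Matrix.traceLinearMap_apply]
  rw [D_eq_trace, hM a, Matrix.sub_mul, Matrix.trace_sub]
  congr 1
  · rw [mul_assoc]
  · rw [Matrix.trace_mul_comm (a*M) y, ← mul_assoc, Matrix.trace_mul_comm (y*a) M,
      ← mul_assoc]


lemma gen_identity (a c b x : MatC n) :
    jord (jord a c) (jord b x) - jord (jord b (jord a c)) x
    = (jord a (jord b (jord c x)) - jord (jord b a) (jord c x))
      + (jord c (jord b (jord a x)) - jord (jord b c) (jord a x)) := by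
  simp only [jord, smul_add, mul_add, add_mul, smul_mul_assoc, mul_smul_comm, smul_smul,
    mul_assoc]
  module

lemma main2 (D : MatC n →L[ℂ] (MatC n →L[ℂ] ℂ))
    (m : ℕ) (x₀ : Fin m → (MatC n →L[ℂ] ℂ)) (b : Fin m → MatC n)
    (hrep : ∀ a y : MatC n, D a y
      = ∑ i, (x₀ i (jord a (jord (b i) y)) - x₀ i (jord (jord (b i) a) y))) :
    ∀ a c x : MatC n, D (jord a c) x = D a (jord c x) + D c (jord a x) := by
  intro a c x
  rw [hrep, hrep, hrep, ← Finset.sum_add_distrib]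
  congr 1; funext i
  rw [← map_sub, ← map_sub, ← map_sub, ← map_add, gen_identity]

lemma EE_M_EE (Mx : MatC n) (i j : Fin n) :
    EE j i * Mx * EE i j = Matrix.single j j (Mx i i) := by
  ext p s
  by_cases hp : p = j <;> by_cases hs : s = j <;> simp [hp, hs]
  all_goals exact (Matrix.single_apply_of_ne _ _ _ _ _ (by tauto)).symm

lemma sum_EE_M_EE (Mx : MatC n) :
    ∑ p : Fin n × Fin n, EE p.2 p.1 * Mx * EE p.1 p.2 = Matrix.trace Mx • (1 : MatC n) := by
  rw [Fintype.sum_prod_type]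
  have e1 : ∀ i : Fin n, ∑ j : Fin n, EE j i * Mx * EE i j = Mx i i • (1 : MatC n) := by
    intro i
    rw [Finset.sum_congr rfl (fun j _ => EE_M_EE Mx i j)]
    rw [Finset.sum_congr rfl (fun j _ => EE_smul j j (Mx i i)), ← Finset.smul_sum, sum_EE_one]
  rw [Finset.sum_congr rfl (fun i _ => e1 i), ← Finset.sum_smul, Matrix.trace]
  rfl

lemma per_p (a y : MatC n) (i j : Fin n) :
    EE j i * jord a (jord (EE i j) y) - EE j i * jord (jord (EE i j) a) y
    = (4⁻¹:ℂ) • ((EE j i * (a*y) * EE i j + (EE j i * EE i j) * (y*a))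
        - ((EE j i * EE i j) * (a*y) + EE j i * (y*a) * EE i j)) := by
  simp only [jord, smul_add, smul_sub, mul_add, add_mul, mul_sub, sub_mul,
    smul_mul_assoc, mul_smul_comm, smul_smul, mul_assoc]
  module

lemma EE_mul_EE_same (i j : Fin n) : EE j i * EE i j = EE j j := by
  simp

lemma key_sum (a y : MatC n) :
    ∑ p : Fin n × Fin n, (EE p.2 p.1 * jord a (jord (EE p.1 p.2) y)
       - EE p.2 p.1 * jord (jord (EE p.1 p.2) a) y)
    = ((4⁻¹ : ℂ) * n) • (y*a - a*y) := by
  rw [Finset.sum_congr rfl (fun p _ => per_p a y p.1 p.2), ← Finset.smul_sum]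
  have hsplit : ∑ p : Fin n × Fin n,
      ((EE p.2 p.1 * (a*y) * EE p.1 p.2 + (EE p.2 p.1 * EE p.1 p.2) * (y*a))
        - ((EE p.2 p.1 * EE p.1 p.2) * (a*y) + EE p.2 p.1 * (y*a) * EE p.1 p.2))
      = (∑ p : Fin n × Fin n, EE p.2 p.1 * (a*y) * EE p.1 p.2
          + ∑ p : Fin n × Fin n, (EE p.2 p.1 * EE p.1 p.2) * (y*a))
        - (∑ p : Fin n × Fin n, (EE p.2 p.1 * EE p.1 p.2) * (a*y)
          + ∑ p : Fin n × Fin n, EE p.2 p.1 * (y*a) * EE p.1 p.2) := by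
    rw [Finset.sum_sub_distrib, Finset.sum_add_distrib, Finset.sum_add_distrib]
  rw [hsplit, sum_EE_M_EE (a*y), sum_EE_M_EE (y*a)]
  have hEE : ∀ X : MatC n, ∑ p : Fin n × Fin n, (EE p.2 p.1 * EE p.1 p.2) * X
      = (n : ℂ) • X := by
    intro X
    rw [Finset.sum_congr rfl (fun p _ => by rw [EE_mul_EE_same p.1 p.2])]
    rw [Fintype.sum_prod_type]
    have : ∀ i : Fin n, ∑ j : Fin n, EE j j * X = X := by
      intro i
      rw [← Finset.sum_mul, sum_EE_one, one_mul]
    rw [Finset.sum_congr rfl (fun i _ => this i), Finset.sum_const, Finset.card_univ,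
      Fintype.card_fin]
    rw [← Nat.cast_smul_eq_nsmul ℂ]
  rw [hEE (y*a), hEE (a*y), Matrix.trace_mul_comm a y]
  have : Matrix.trace (y*a) • (1:MatC n) + (n:ℂ) • (y*a)
      - ((n:ℂ) • (a*y) + Matrix.trace (y*a) • (1:MatC n)) = (n:ℂ) • (y*a - a*y) := by
    rw [smul_sub]; abel
  rw [this, smul_smul]

lemma main1 (D : MatC n →L[ℂ] (MatC n →L[ℂ] ℂ)) (ψ : MatC n →L[ℂ] ℂ)
    (hψ : ∀ a y : MatC n, D a y = ψ (a * y) - ψ (y * a)) :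
    ∃ (m : ℕ) (x₀ : Fin m → (MatC n →L[ℂ] ℂ)) (b : Fin m → MatC n),
      ∀ a y : MatC n, D a y
        = ∑ i, (x₀ i (jord a (jord (b i) y)) - x₀ i (jord (jord (b i) a) y)) := by
  rcases Nat.eq_zero_or_pos n with rfl | hn
  · refine ⟨0, fun i => 0, fun i => 0, fun a y => ?_⟩
    have ha : a = 0 := Subsingleton.elim _ _
    simp [ha]
  · have hn' : (n : ℂ) ≠ 0 := Nat.cast_ne_zero.mpr hn.ne'
    set c : ℂ := -(4 / (n : ℂ)) with hc
    set x0fun : Fin n × Fin n → (MatC n →L[ℂ] ℂ) := fun p =>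
      LinearMap.toContinuousLinearMap
        (c • ((ψ : MatC n →ₗ[ℂ] ℂ).comp (LinearMap.mulLeft ℂ (EE p.2 p.1)))) with hx0
    have hx0eval : ∀ p z, x0fun p z = c * ψ (EE p.2 p.1 * z) := by
      intro p z
      simp [hx0]
    refine ⟨n*n, fun i => x0fun (finProdFinEquiv.symm i),
      fun i => EE (finProdFinEquiv.symm i).1 (finProdFinEquiv.symm i).2, fun a y => ?_⟩
    rw [Equiv.sum_comp (finProdFinEquiv.symm)
      (fun p => (x0fun p (jord a (jord (EE p.1 p.2) y))
        - x0fun p (jord (jord (EE p.1 p.2) a) y)))]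
    have : ∀ p : Fin n × Fin n,
        x0fun p (jord a (jord (EE p.1 p.2) y)) - x0fun p (jord (jord (EE p.1 p.2) a) y)
        = c * ψ (EE p.2 p.1 * jord a (jord (EE p.1 p.2) y)
            - EE p.2 p.1 * jord (jord (EE p.1 p.2) a) y) := by
      intro p
      rw [hx0eval, hx0eval, map_sub, mul_sub]
    rw [Finset.sum_congr rfl (fun p _ => this p), ← Finset.mul_sum, ← map_sum, key_sum,
      _root_.map_smul, smul_eq_mul, map_sub, hψ]
    rw [hc]
    field_simp
    ring

end Final

end Aux

/-- For `A = M_n(ℂ)`: inner binary `*`-derivations = inner Jordan derivations that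
are `*`-derivations = continuous Jordan `*`-derivations. -/
theorem matrix_star_derivation_sets_coincide (n : ℕ) :
    ({D : MatC n →L[ℂ] (MatC n →L[ℂ] ℂ) | IsInnerBinaryDer D ∧ IsStarMap D}
      = {D | IsInnerJordanDer D ∧ IsStarMap D})
    ∧ ({D : MatC n →L[ℂ] (MatC n →L[ℂ] ℂ) | IsInnerJordanDer D ∧ IsStarMap D}
      = {D | IsJordanDer D ∧ IsStarMap D}) := by
  have step1 : ∀ D : MatC n →L[ℂ] (MatC n →L[ℂ] ℂ), IsInnerBinaryDer D → IsInnerJordanDer D := by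
    rintro D ⟨ψ, hψ⟩
    exact main1 D ψ hψ
  have step2 : ∀ D : MatC n →L[ℂ] (MatC n →L[ℂ] ℂ), IsInnerJordanDer D → IsJordanDer D := by
    rintro D ⟨m, x₀, b, h⟩
    exact main2 D m x₀ b h
  have step3 : ∀ D : MatC n →L[ℂ] (MatC n →L[ℂ] ℂ), IsJordanDer D → IsInnerBinaryDer D := by
    intro D h
    exact main3 D h
  constructor <;> ext D <;> simp only [Set.mem_setOf_eq]
  · exact ⟨fun ⟨h, hs⟩ => ⟨step1 D h, hs⟩, fun ⟨h, hs⟩ => ⟨step3 D (step2 D h), hs⟩⟩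
  · exact ⟨fun ⟨h, hs⟩ => ⟨step2 D h, hs⟩, fun ⟨h, hs⟩ => ⟨step1 D (step3 D h), hs⟩⟩
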